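/- arXiv:1509.04160 — 2 statements merged into one kernel-verified Lean document; each statement's English description precedes it below -/
import Mathlib

section
/- Let ((W_i, c_i))_{i∈I} be a fusion frame for H with bounds α ≤ β, and let A ∈ B(H) be boundedly invertible. Then ((AW_i, c_i))_{i∈I} is a fusion frame for H with bounds α γ^{-2} and β γ², where γ = ‖A‖‖A^{-1}‖. -/
/-! The adjoint `A†` intertwines the two families of projections up to the constants
`‖A‖` and `‖A⁻¹‖`: since `x - P_{AW} x ⊥ AW`, we get `A†x - A†P_{AW}x ⊥ W`, so
`P_W A† x = P_W A† P_{AW} x` and `‖P_W A† x‖ ≤ ‖A‖ ‖P_{AW} x‖`; the same argument for `A⁻¹` and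
the subspace `AW` gives `‖P_{AW} x‖ ≤ ‖A⁻¹‖ ‖P_W A† x‖`. Summing these over `i` and comparing
`‖A† x‖` with `‖x‖` transfers the frame bounds of `(Wᵢ)` at `A† x` to those of `(AWᵢ)` at `x`. -/

open ContinuousLinearMap (adjoint adjoint_inner_right adjoint_comp adjoint_id le_opNorm)

noncomputable def proj {H : Type*} [NormedAddCommGroup H] [InnerProductSpace ℂ H]
    (W : Submodule ℂ H) [CompleteSpace W] : H →L[ℂ] H :=
  W.subtypeL.comp (W.orthogonalProjectionOnto)

theorem proj_eq_starProjection {H : Type*} [NormedAddCommGroup H] [InnerProductSpace ℂ H]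
    (W : Submodule ℂ H) [CompleteSpace W] : proj W = W.starProjection :=
  rfl

section Adjoint

variable {𝕜 E F : Type*} [RCLike 𝕜] [NormedAddCommGroup E] [InnerProductSpace 𝕜 E]
  [NormedAddCommGroup F] [InnerProductSpace 𝕜 F] [CompleteSpace E] [CompleteSpace F]

theorem starProjection_adjoint_apply_starProjection (T : E →L[𝕜] F)
    {W : Submodule 𝕜 E} [W.HasOrthogonalProjection] {U : Submodule 𝕜 F}
    [U.HasOrthogonalProjection] (hWU : W.map (T : E →ₗ[𝕜] F) ≤ U) (x : F) :
    W.starProjection (adjoint T (U.starProjection x)) = W.starProjection (adjoint T x) := by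
  have hperp : adjoint T (x - U.starProjection x) ∈ Wᗮ := by
    intro w hw
    rw [adjoint_inner_right]
    exact U.sub_starProjection_mem_orthogonal x (T w) (hWU ⟨w, hw, rfl⟩)
  rw [eq_comm, ← sub_eq_zero, ← map_sub, ← map_sub, Submodule.starProjection_apply_eq_zero_iff]
  exact hperp

theorem norm_starProjection_adjoint_apply_le (T : E →L[𝕜] F)
    {W : Submodule 𝕜 E} [W.HasOrthogonalProjection] {U : Submodule 𝕜 F}
    [U.HasOrthogonalProjection] (hWU : W.map (T : E →ₗ[𝕜] F) ≤ U) (x : F) :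
    ‖W.starProjection (adjoint T x)‖ ≤ ‖T‖ * ‖U.starProjection x‖ :=
  calc ‖W.starProjection (adjoint T x)‖
      = ‖W.starProjection (adjoint T (U.starProjection x))‖ := by
        rw [starProjection_adjoint_apply_starProjection T hWU]
    _ ≤ ‖adjoint T (U.starProjection x)‖ := W.norm_starProjection_apply_le _
    _ ≤ ‖adjoint T‖ * ‖U.starProjection x‖ := le_opNorm _ _
    _ = ‖T‖ * ‖U.starProjection x‖ := by rw [LinearIsometryEquiv.norm_map]

theorem adjoint_symm_adjoint_apply (A : E ≃L[𝕜] F) (x : F) :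
    adjoint (A.symm : F →L[𝕜] E) (adjoint (A : E →L[𝕜] F) x) = x := by
  rw [← ContinuousLinearMap.comp_apply, ← adjoint_comp, A.coe_comp_coe_symm, adjoint_id,
    ContinuousLinearMap.id_apply]

theorem norm_le_norm_symm_mul_norm_adjoint_apply (A : E ≃L[𝕜] F) (x : F) :
    ‖x‖ ≤ ‖(A.symm : F →L[𝕜] E)‖ * ‖adjoint (A : E →L[𝕜] F) x‖ :=
  calc ‖x‖ = ‖adjoint (A.symm : F →L[𝕜] E) (adjoint (A : E →L[𝕜] F) x)‖ := by
        rw [adjoint_symm_adjoint_apply]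
    _ ≤ ‖adjoint (A.symm : F →L[𝕜] E)‖ * ‖adjoint (A : E →L[𝕜] F) x‖ := le_opNorm _ _
    _ = ‖(A.symm : F →L[𝕜] E)‖ * ‖adjoint (A : E →L[𝕜] F) x‖ := by
        rw [LinearIsometryEquiv.norm_map]

theorem norm_starProjection_map_apply_le (A : E ≃L[𝕜] F) (W : Submodule 𝕜 E)
    [W.HasOrthogonalProjection] [(W.map (A : E →L[𝕜] F).toLinearMap).HasOrthogonalProjection]
    (x : F) :
    ‖(W.map (A : E →L[𝕜] F).toLinearMap).starProjection x‖ ≤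
      ‖(A.symm : F →L[𝕜] E)‖ * ‖W.starProjection (adjoint (A : E →L[𝕜] F) x)‖ := by
  have hmap : (W.map (A : E →L[𝕜] F).toLinearMap).map (A.symm : F →L[𝕜] E).toLinearMap ≤ W := by
    rintro _ ⟨_, ⟨w, hw, rfl⟩, rfl⟩
    simpa using hw
  simpa only [adjoint_symm_adjoint_apply] using
    norm_starProjection_adjoint_apply_le (A.symm : F →L[𝕜] E) hmap (adjoint (A : E →L[𝕜] F) x)

end Adjoint

theorem summable_and_tsum_le_of_le_mul {I : Type*} (c a b : I → ℝ) (C : ℝ)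
    (ha : ∀ i, 0 ≤ a i) (hab : ∀ i, a i ≤ C * b i)
    (hb : Summable fun i => c i ^ 2 * b i ^ 2) :
    (Summable fun i => c i ^ 2 * a i ^ 2) ∧
      ∑' i, c i ^ 2 * a i ^ 2 ≤ C ^ 2 * ∑' i, c i ^ 2 * b i ^ 2 := by
  have hle : ∀ i, c i ^ 2 * a i ^ 2 ≤ C ^ 2 * (c i ^ 2 * b i ^ 2) := fun i =>
    calc c i ^ 2 * a i ^ 2 ≤ c i ^ 2 * (C * b i) ^ 2 := by gcongr; exacts [ha i, hab i]
      _ = C ^ 2 * (c i ^ 2 * b i ^ 2) := by ring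
  have hsum : Summable fun i => c i ^ 2 * a i ^ 2 :=
    (hb.mul_left _).of_nonneg_of_le (fun i => by positivity) hle
  exact ⟨hsum, (hsum.tsum_le_tsum hle (hb.mul_left _)).trans_eq tsum_mul_left⟩

theorem zpow_neg_two_mul_le {a γ S : ℝ} (hS : 0 ≤ S) (h : a ≤ γ ^ 2 * S) :
    γ ^ (-2 : ℤ) * a ≤ S := by
  rcases eq_or_ne γ 0 with rfl | hγ
  · simpa using hS
  · rw [zpow_neg, zpow_ofNat, inv_mul_le_iff₀ (by positivity)]
    exact h

theorem fusionFrame_map_general {H : Type*} [NormedAddCommGroup H] [InnerProductSpace ℂ H]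
    [CompleteSpace H] {I : Type*}
    (W : I → Submodule ℂ H) [∀ i, CompleteSpace (W i)]
    (c : I → ℝ) (α β : ℝ) (hα : 0 < α) (hβ : 0 < β)
    (hsum : ∀ x : H, Summable fun i => (c i) ^ 2 * ‖proj (W i) x‖ ^ 2)
    (hframe : ∀ x : H,
      α * ‖x‖ ^ 2 ≤ ∑' i, (c i) ^ 2 * ‖proj (W i) x‖ ^ 2 ∧
      ∑' i, (c i) ^ 2 * ‖proj (W i) x‖ ^ 2 ≤ β * ‖x‖ ^ 2)
    (A : H ≃L[ℂ] H) [∀ i, CompleteSpace ((W i).map ((A : H →L[ℂ] H) : H →ₗ[ℂ] H))] :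
    (∀ x : H, Summable fun i => (c i) ^ 2 * ‖proj ((W i).map ((A : H →L[ℂ] H) : H →ₗ[ℂ] H)) x‖ ^ 2) ∧
    ∀ x : H,
      α * (‖(A : H →L[ℂ] H)‖ * ‖(A.symm : H →L[ℂ] H)‖) ^ (-2 : ℤ) * ‖x‖ ^ 2 ≤
          ∑' i, (c i) ^ 2 * ‖proj ((W i).map ((A : H →L[ℂ] H) : H →ₗ[ℂ] H)) x‖ ^ 2 ∧
      ∑' i, (c i) ^ 2 * ‖proj ((W i).map ((A : H →L[ℂ] H) : H →ₗ[ℂ] H)) x‖ ^ 2 ≤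
          β * (‖(A : H →L[ℂ] H)‖ * ‖(A.symm : H →L[ℂ] H)‖) ^ 2 * ‖x‖ ^ 2 := by
  simp only [proj_eq_starProjection] at hsum hframe ⊢
  have hcompare (x : H) := summable_and_tsum_le_of_le_mul c _ _ _ (fun _ => norm_nonneg _)
    (fun i => norm_starProjection_map_apply_le A (W i) x) (hsum _)
  refine ⟨fun x => (hcompare x).1, fun x => ⟨?_, ?_⟩⟩
  · obtain ⟨-, hlower⟩ := summable_and_tsum_le_of_le_mul c _ _ _ (fun _ => norm_nonneg _)
      (fun i => norm_starProjection_adjoint_apply_le (A : H →L[ℂ] H) (W := W i) le_rfl x)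
      (hcompare x).1
    have hx := norm_le_norm_symm_mul_norm_adjoint_apply A x
    rw [mul_comm α, mul_assoc]
    refine zpow_neg_two_mul_le (tsum_nonneg fun _ => by positivity) ?_
    calc α * ‖x‖ ^ 2 ≤ α * (‖(A.symm : H →L[ℂ] H)‖ * ‖adjoint (A : H →L[ℂ] H) x‖) ^ 2 := by
          gcongr
      _ = ‖(A.symm : H →L[ℂ] H)‖ ^ 2 * (α * ‖adjoint (A : H →L[ℂ] H) x‖ ^ 2) := by ring
      _ ≤ _ := mul_le_mul_of_nonneg_left ((hframe _).1.trans hlower) (sq_nonneg _)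
      _ = _ := by ring
  · have hy : ‖adjoint (A : H →L[ℂ] H) x‖ ≤ ‖(A : H →L[ℂ] H)‖ * ‖x‖ :=
      (le_opNorm _ _).trans_eq (by rw [LinearIsometryEquiv.norm_map])
    calc _ ≤ ‖(A.symm : H →L[ℂ] H)‖ ^ 2 * (β * ‖adjoint (A : H →L[ℂ] H) x‖ ^ 2) := by
          refine (hcompare x).2.trans ?_
          gcongr
          exact (hframe _).2
      _ ≤ ‖(A.symm : H →L[ℂ] H)‖ ^ 2 * (β * (‖(A : H →L[ℂ] H)‖ * ‖x‖) ^ 2) := by gcongr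
      _ = _ := by ring

/-- If `((Wᵢ, cᵢ))` is a fusion frame for `H` with bounds `α ≤ β` and `A ∈ B(H)` is
boundedly invertible, then `((AWᵢ, cᵢ))` is a fusion frame for `H` with bounds
`α γ⁻²` and `β γ²`, where `γ = ‖A‖ ‖A⁻¹‖`. -/
theorem fusionFrame_map {H : Type*} [NormedAddCommGroup H] [InnerProductSpace ℂ H]
    [CompleteSpace H] {I : Type*} [Countable I]
    (W : I → Submodule ℂ H) [∀ i, CompleteSpace (W i)]
    (c : I → ℝ) (hc : ∀ i, 0 ≤ c i) (α β : ℝ) (hα : 0 < α) (hβ : 0 < β) (hαβ : α ≤ β)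
    (hsum : ∀ x : H, Summable fun i => (c i) ^ 2 * ‖proj (W i) x‖ ^ 2)
    (hframe : ∀ x : H,
      α * ‖x‖ ^ 2 ≤ ∑' i, (c i) ^ 2 * ‖proj (W i) x‖ ^ 2 ∧
      ∑' i, (c i) ^ 2 * ‖proj (W i) x‖ ^ 2 ≤ β * ‖x‖ ^ 2)
    (A : H ≃L[ℂ] H) [∀ i, CompleteSpace ((W i).map ((A : H →L[ℂ] H) : H →ₗ[ℂ] H))] :
    (∀ x : H, Summable fun i => (c i) ^ 2 * ‖proj ((W i).map ((A : H →L[ℂ] H) : H →ₗ[ℂ] H)) x‖ ^ 2) ∧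
    ∀ x : H,
      α * (‖(A : H →L[ℂ] H)‖ * ‖(A.symm : H →L[ℂ] H)‖) ^ (-2 : ℤ) * ‖x‖ ^ 2 ≤
          ∑' i, (c i) ^ 2 * ‖proj ((W i).map ((A : H →L[ℂ] H) : H →ₗ[ℂ] H)) x‖ ^ 2 ∧
      ∑' i, (c i) ^ 2 * ‖proj ((W i).map ((A : H →L[ℂ] H) : H →ₗ[ℂ] H)) x‖ ^ 2 ≤
          β * (‖(A : H →L[ℂ] H)‖ * ‖(A.symm : H →L[ℂ] H)‖) ^ 2 * ‖x‖ ^ 2 :=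
  fusionFrame_map_general W c α β hα hβ hsum hframe A
end

section
/- Let A be a B(H,K)-valued frame sequence with frame bounds α ≤ β, and B a Bessel sequence with ‖T_A - T_B‖ ≤ μ, where μ < √α and Δ(H_A, H_B) := max{δ(H_A,H_B), δ(H_B,H_A)} < 1. Then B is an operator-valued frame sequence with frame bounds (√α - μ)² and (δ(H_B, H_A^⊥)√β + μ)². If A is a frame for H then so is B. -/
/-!
Since `‖T_A - T_B‖ ≤ μ`, the norms `‖T_A x‖` and `‖T_B x‖` differ by at most `μ‖x‖`.
Upper bound: `T_A` vanishes on `H_Aᗮ = ker T_A`, so `T_A x = T_A (P_{H_A} x)`, and for `x ∈ H_B`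
we have `‖P_{H_A} x‖ ≤ δ(H_B, H_Aᗮ) ‖x‖`.
Lower bound: `P_{H_B}` restricted to `H_A` is bounded below because `δ(H_A, H_B) < 1` and has dense
range in `H_B` because `δ(H_B, H_A) < 1`, so it maps `H_A` onto `H_B`. Thus every `x ∈ H_B` is
`P_{H_B} y` with `y ∈ H_A`, `‖x‖ ≤ ‖y‖` and `T_B x = T_B y`, to which the frame bound of `A` applies.
-/

open ContinuousLinearMap

/-- The gap `δ(V,W) = ‖P_{Wᗮ}|V‖` from `V` to `W`. -/
noncomputable def gap {H : Type*} [NormedAddCommGroup H] [InnerProductSpace ℂ H]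
    [CompleteSpace H] (V W : Submodule ℂ H) : ℝ :=
  ‖(proj Wᗮ).comp V.subtypeL‖

lemma Real.sqrt_mul_le_of_mul_sq_le_sq {a b c : ℝ} (hb : 0 ≤ b) (hc : 0 ≤ c)
    (h : a * b ^ 2 ≤ c ^ 2) : √a * b ≤ c :=
  calc √a * b = √(a * b ^ 2) := by rw [Real.sqrt_mul' a (sq_nonneg b), Real.sqrt_sq hb]
    _ ≤ √(c ^ 2) := Real.sqrt_le_sqrt h
    _ = c := Real.sqrt_sq hc

lemma Real.le_sqrt_mul_of_sq_le_mul_sq {a b c : ℝ} (hb : 0 ≤ b) (hc : 0 ≤ c)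
    (h : c ^ 2 ≤ a * b ^ 2) : c ≤ √a * b :=
  calc c = √(c ^ 2) := (Real.sqrt_sq hc).symm
    _ ≤ √(a * b ^ 2) := Real.sqrt_le_sqrt h
    _ = √a * b := by rw [Real.sqrt_mul' a (sq_nonneg b), Real.sqrt_sq hb]

lemma ContinuousLinearMap.orthogonal_closure_range_adjoint {E F : Type*}
    [NormedAddCommGroup E] [InnerProductSpace ℂ E] [CompleteSpace E]
    [NormedAddCommGroup F] [InnerProductSpace ℂ F] [CompleteSpace F] (T : E →L[ℂ] F) :
    (LinearMap.range (adjoint T).toLinearMap).topologicalClosureᗮ = T.ker := by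
  rw [Submodule.orthogonal_closure, orthogonal_range, adjoint_adjoint]

section Gap

variable {H : Type*} [NormedAddCommGroup H] [InnerProductSpace ℂ H] [CompleteSpace H]
  {V W : Submodule ℂ H}

lemma gap_nonneg (V W : Submodule ℂ H) : 0 ≤ gap V W :=
  norm_nonneg ((proj Wᗮ).comp V.subtypeL)

lemma norm_starProjection_orthogonal_le_gap {v : H} (hv : v ∈ V) :
    ‖Wᗮ.starProjection v‖ ≤ gap V W * ‖v‖ :=
  ((proj Wᗮ).comp V.subtypeL).le_opNorm ⟨v, hv⟩

lemma inf_orthogonal_eq_bot_of_gap_lt_one (h : gap W V < 1) : W ⊓ Vᗮ = ⊥ := by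
  refine (Submodule.eq_bot_iff _).mpr fun w ⟨hwW, hwV⟩ => norm_eq_zero.mp ?_
  have hle : ‖w‖ ≤ gap W V * ‖w‖ := by
    simpa only [Submodule.starProjection_eq_self_iff.mpr hwV] using
      norm_starProjection_orthogonal_le_gap (W := V) hwW
  nlinarith [norm_nonneg w]

lemma one_sub_gap_sq_mul_sq_norm_le [W.HasOrthogonalProjection] {v : H} (hv : v ∈ V) :
    (1 - gap V W ^ 2) * ‖v‖ ^ 2 ≤ ‖W.starProjection v‖ ^ 2 := by
  have hsplit := W.norm_sq_eq_add_norm_sq_starProjection v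
  have hperp := norm_starProjection_orthogonal_le_gap (W := W) hv
  have := mul_self_le_mul_self (norm_nonneg _) hperp
  nlinarith

lemma exists_mem_starProjection_eq [CompleteSpace V] [CompleteSpace W]
    (hVW : gap V W < 1) (hWV : gap W V < 1) {x : H} (hx : x ∈ W) :
    ∃ y ∈ V, W.starProjection y = x := by
  set P : V →L[ℂ] W := W.orthogonalProjectionOnto ∘L V.subtypeL
  have hc : 0 < 1 - gap V W ^ 2 := by nlinarith [gap_nonneg V W]
  have hanti : AntilipschitzWith (√(1 - gap V W ^ 2))⁻¹.toNNReal P := by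
    refine P.antilipschitz_of_bound fun v => ?_
    have := Real.sqrt_mul_le_of_mul_sq_le_sq (norm_nonneg v) (norm_nonneg (P v))
      (one_sub_gap_sq_mul_sq_norm_le v.2)
    rw [Real.coe_toNNReal _ (by positivity), inv_mul_eq_div, le_div_iff₀ (by positivity)]
    linarith
  have hdense : P.range.topologicalClosure = ⊤ := by
    rw [Submodule.topologicalClosure_eq_top_iff, Submodule.eq_bot_iff]
    intro b hb
    have hbV : (b : H) ∈ Vᗮ := fun u hu => by
      rw [← W.inner_orthogonalProjectionOnto_eq_of_mem_right b u]
      exact hb _ ⟨⟨u, hu⟩, rfl⟩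
    have := inf_orthogonal_eq_bot_of_gap_lt_one hWV ▸ Submodule.mem_inf.mpr ⟨b.2, hbV⟩
    exact Subtype.ext ((Submodule.mem_bot ℂ).mp this)
  obtain ⟨y, hy⟩ := ((P.bijective_iff_dense_range_and_antilipschitz).mpr
    ⟨hdense, _, hanti⟩).2 ⟨x, hx⟩
  exact ⟨y, y.2, congrArg Subtype.val hy⟩

end Gap

section Perturbation

variable {H F : Type*} [NormedAddCommGroup H] [InnerProductSpace ℂ H]
  [NormedAddCommGroup F] [NormedSpace ℂ F] {TA TB : H →L[ℂ] F} {μ : ℝ}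

lemma mul_norm_le_norm_apply_of_opNorm_sub_le {V W : Submodule ℂ H} [W.HasOrthogonalProjection]
    {a : ℝ}
    (hsurj : ∀ x ∈ W, ∃ y ∈ V, W.starProjection y = x) (hkerB : Wᗮ ≤ TB.ker)
    (hA : ∀ y ∈ V, a * ‖y‖ ≤ ‖TA y‖) (hμ : ‖TA - TB‖ ≤ μ) (hμa : μ ≤ a)
    {x : H} (hx : x ∈ W) : (a - μ) * ‖x‖ ≤ ‖TB x‖ := by
  obtain ⟨y, hyV, rfl⟩ := hsurj x hx
  have hTB : TB y = TB (W.starProjection y) :=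
    sub_eq_zero.mp (by simpa using hkerB (W.sub_starProjection_mem_orthogonal y))
  have hdiff : ‖TA y‖ - ‖TB y‖ ≤ μ * ‖y‖ :=
    (norm_sub_norm_le _ _).trans ((TA - TB).le_of_opNorm_le hμ y)
  calc (a - μ) * ‖W.starProjection y‖ ≤ (a - μ) * ‖y‖ :=
        mul_le_mul_of_nonneg_left (W.norm_starProjection_apply_le y) (sub_nonneg.mpr hμa)
    _ ≤ ‖TB (W.starProjection y)‖ := by rw [← hTB]; linarith [hA y hyV]

lemma norm_apply_le_mul_norm_of_opNorm_sub_le [CompleteSpace H] {V W : Submodule ℂ H}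
    [CompleteSpace V] {b : ℝ}
    (hkerA : Vᗮ ≤ TA.ker) (hA : ∀ u ∈ V, ‖TA u‖ ≤ b * ‖u‖) (hb : 0 ≤ b)
    (hμ : ‖TA - TB‖ ≤ μ) {x : H} (hx : x ∈ W) :
    ‖TB x‖ ≤ (gap W Vᗮ * b + μ) * ‖x‖ := by
  set u := Vᗮᗮ.starProjection x
  have huV : u ∈ V := V.orthogonal_orthogonal ▸ Vᗮᗮ.starProjection_apply_mem x
  have hTA : TA x = TA u := by
    rw [← sub_eq_zero, ← map_sub]
    exact hkerA (V.triorthogonal_eq_orthogonal ▸ Vᗮᗮ.sub_starProjection_mem_orthogonal x)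
  have hdiff : ‖TB x‖ - ‖TA x‖ ≤ μ * ‖x‖ := by
    have := (TA - TB).le_of_opNorm_le hμ x
    rw [sub_apply, norm_sub_rev] at this
    exact (norm_sub_norm_le _ _).trans this
  have hu : b * ‖u‖ ≤ b * (gap W Vᗮ * ‖x‖) :=
    mul_le_mul_of_nonneg_left (norm_starProjection_orthogonal_le_gap hx) hb
  rw [hTA] at hdiff
  linarith [hA u huV]

end Perturbation

theorem perturbed_is_frame_sequence_general {H K : Type*}
    [NormedAddCommGroup H] [InnerProductSpace ℂ H] [CompleteSpace H]
    [NormedAddCommGroup K] [InnerProductSpace ℂ K] [CompleteSpace K]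
    {I : Type*} (TA TB : H →L[ℂ] lp (fun _ : I => K) 2)
    (HA HB : Submodule ℂ H)
    (hHA : HA = (LinearMap.range (adjoint TA).toLinearMap).topologicalClosure)
    (hHB : HB = (LinearMap.range (adjoint TB).toLinearMap).topologicalClosure)
    (α β : ℝ)
    (hframe : ∀ x ∈ HA, α * ‖x‖ ^ 2 ≤ ‖TA x‖ ^ 2 ∧ ‖TA x‖ ^ 2 ≤ β * ‖x‖ ^ 2)
    (μ : ℝ) (hμ : ‖TA - TB‖ ≤ μ) (hμα : μ < Real.sqrt α)
    (hΔ : max (gap HA HB) (gap HB HA) < 1) :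
    (∀ x ∈ HB,
      (Real.sqrt α - μ) ^ 2 * ‖x‖ ^ 2 ≤ ‖TB x‖ ^ 2 ∧
      ‖TB x‖ ^ 2 ≤ (gap HB HAᗮ * Real.sqrt β + μ) ^ 2 * ‖x‖ ^ 2) ∧
    (HA = ⊤ → HB = ⊤) := by
  have : CompleteSpace HA := hHA ▸ inferInstance
  have : CompleteSpace HB := hHB ▸ inferInstance
  have hkerA : HAᗮ ≤ TA.ker := (hHA ▸ TA.orthogonal_closure_range_adjoint).le
  have hkerB : HBᗮ ≤ TB.ker := (hHB ▸ TB.orthogonal_closure_range_adjoint).le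
  obtain ⟨hAB, hBA⟩ := max_lt_iff.mp hΔ
  have hlow : ∀ y ∈ HA, √α * ‖y‖ ≤ ‖TA y‖ := fun y hy =>
    Real.sqrt_mul_le_of_mul_sq_le_sq (norm_nonneg _) (norm_nonneg _) (hframe y hy).1
  have hup : ∀ y ∈ HA, ‖TA y‖ ≤ √β * ‖y‖ := fun y hy =>
    Real.le_sqrt_mul_of_sq_le_mul_sq (norm_nonneg _) (norm_nonneg _) (hframe y hy).2
  refine ⟨fun x hx => ⟨?_, ?_⟩, fun hAtop => ?_⟩
  · rw [← mul_pow]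
    refine pow_le_pow_left₀ (mul_nonneg (sub_nonneg.mpr hμα.le) (norm_nonneg x)) ?_ 2
    exact mul_norm_le_norm_apply_of_opNorm_sub_le
      (fun x hx => exists_mem_starProjection_eq hAB hBA hx) hkerB hlow hμ hμα.le hx
  · rw [← mul_pow]
    exact pow_le_pow_left₀ (norm_nonneg _)
      (norm_apply_le_mul_norm_of_opNorm_sub_le hkerA hup (Real.sqrt_nonneg β) hμ hx) 2
  · rw [← HB.orthogonal_eq_bot_iff, ← top_inf_eq HBᗮ]
    exact inf_orthogonal_eq_bot_of_gap_lt_one (hAtop ▸ hAB)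

/-- Let `A` be an operator-valued frame sequence with frame bounds `α ≤ β` and `B` a
Bessel sequence with `‖T_A - T_B‖ ≤ μ < √α` and `Δ(H_A, H_B) < 1`. Then `B` is an
operator-valued frame sequence with frame bounds `(√α - μ)²` and
`(δ(H_B, H_Aᗮ)√β + μ)²`; and if `A` is a frame for `H` then so is `B`. -/
theorem perturbed_is_frame_sequence {H K : Type*}
    [NormedAddCommGroup H] [InnerProductSpace ℂ H] [CompleteSpace H]
    [NormedAddCommGroup K] [InnerProductSpace ℂ K] [CompleteSpace K]
    {I : Type*} [Countable I] (TA TB : H →L[ℂ] lp (fun _ : I => K) 2)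
    (HA HB : Submodule ℂ H)
    (hHA : HA = (LinearMap.range (adjoint TA).toLinearMap).topologicalClosure)
    (hHB : HB = (LinearMap.range (adjoint TB).toLinearMap).topologicalClosure)
    (α β : ℝ) (hα : 0 < α) (hαβ : α ≤ β)
    (hframe : ∀ x ∈ HA, α * ‖x‖ ^ 2 ≤ ‖TA x‖ ^ 2 ∧ ‖TA x‖ ^ 2 ≤ β * ‖x‖ ^ 2)
    (μ : ℝ) (hμ : ‖TA - TB‖ ≤ μ) (hμα : μ < Real.sqrt α)
    (hΔ : max (gap HA HB) (gap HB HA) < 1) :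
    (∀ x ∈ HB,
      (Real.sqrt α - μ) ^ 2 * ‖x‖ ^ 2 ≤ ‖TB x‖ ^ 2 ∧
      ‖TB x‖ ^ 2 ≤ (gap HB HAᗮ * Real.sqrt β + μ) ^ 2 * ‖x‖ ^ 2) ∧
    (HA = ⊤ → HB = ⊤) :=
  perturbed_is_frame_sequence_general TA TB HA HB hHA hHB α β hframe μ hμ hμα hΔ
end
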